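/- Weak modal compatibility is preserved by weak modal refinement: if S ⇄_wc T, S' ≤_m* S, and T' ≤_m* T, then S' ⇄_wc T'. -/

import Mathlib

/-- A modal I/O-transition system (MIO): states, an initial state, a signature of
input, output and internal actions (pairwise disjoint subsets of the action
universe `A`), may-transitions and must-transitions with must ⊆ may. -/
structure MIO (A : Type) where
  State : Type
  start : State
  inp : Set A
  out : Set A
  intl : Set A
  may : State → A → State → Prop
  must : State → A → State → Prop
  inp_out : ∀ a, a ∈ inp → a ∈ out → False
  inp_intl : ∀ a, a ∈ inp → a ∈ intl → False
  out_intl : ∀ a, a ∈ out → a ∈ intl → False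
  must_sub : ∀ s a s', must s a s' → may s a s'

namespace MIO

variable {A B : Type}

/-- The set of all actions of a MIO. -/
def act (S : MIO A) : Set A := S.inp ∪ S.out ∪ S.intl

/-- Two MIOs have the same signature. -/
def SigEq (S T : MIO A) : Prop := S.inp = T.inp ∧ S.out = T.out ∧ S.intl = T.intl

/-- Strong modal refinement `S ≤_m T`. -/
def StrongRefines (S T : MIO A) : Prop :=
  SigEq S T ∧
  ∃ R : S.State → T.State → Prop, R S.start T.start ∧
    ∀ s t, R s t →
      (∀ a t', T.must t a t' → ∃ s', S.must s a s' ∧ R s' t') ∧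
      (∀ a s', S.may s a s' → ∃ t', T.may t a t' ∧ R s' t')

/-- One internal must-transition. -/
def tauMust (S : MIO A) (s s' : S.State) : Prop := ∃ a ∈ S.intl, S.must s a s'

/-- Finitely many (possibly zero) internal must-transitions. -/
def tauMustStar (S : MIO A) : S.State → S.State → Prop := Relation.ReflTransGen S.tauMust

/-- One internal may-transition. -/
def tauMay (S : MIO A) (s s' : S.State) : Prop := ∃ a ∈ S.intl, S.may s a s'

/-- Finitely many (possibly zero) internal may-transitions. -/
def tauMayStar (S : MIO A) : S.State → S.State → Prop := Relation.ReflTransGen S.tauMay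

/-- Weak modal refinement `S ≤_m* T`. -/
def WeakRefines (S T : MIO A) : Prop :=
  SigEq S T ∧
  ∃ R : S.State → T.State → Prop, R S.start T.start ∧
    ∀ s t, R s t →
      (∀ a ∈ T.inp ∪ T.out, ∀ t', T.must t a t' →
        ∃ s1 s2 s', S.tauMustStar s s1 ∧ S.must s1 a s2 ∧ S.tauMustStar s2 s' ∧ R s' t') ∧
      (∀ a ∈ T.intl, ∀ t', T.must t a t' → ∃ s', S.tauMustStar s s' ∧ R s' t') ∧
      (∀ a ∈ S.inp ∪ S.out, ∀ s', S.may s a s' →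
        ∃ t1 t2 t', T.tauMayStar t t1 ∧ T.may t1 a t2 ∧ T.tauMayStar t2 t' ∧ R s' t') ∧
      (∀ a ∈ S.intl, ∀ s', S.may s a s' → ∃ t', T.tauMayStar t t' ∧ R s' t')

/-- Shared actions of two MIOs. -/
def shared (S T : MIO A) : Set A := S.act ∩ T.act

/-- Two MIOs are (syntactically) composable if their actions overlap only on
complementary types. -/
def Composable (S T : MIO A) : Prop :=
  shared S T ⊆ (S.inp ∩ T.out) ∪ (T.inp ∩ S.out)

/-- Synchronous composition `S ⊗_sy T` of composable MIOs. -/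
def syncComp (S T : MIO A) (_h : Composable S T) : MIO A where
  State := S.State × T.State
  start := (S.start, T.start)
  inp := (S.inp ∪ T.inp) \ shared S T
  out := (S.out ∪ T.out) \ shared S T
  intl := S.intl ∪ T.intl ∪ shared S T
  may p a p' :=
    (a ∈ shared S T ∧ S.may p.1 a p'.1 ∧ T.may p.2 a p'.2) ∨
    (a ∈ S.act ∧ a ∉ shared S T ∧ S.may p.1 a p'.1 ∧ p'.2 = p.2) ∨
    (a ∈ T.act ∧ a ∉ shared S T ∧ T.may p.2 a p'.2 ∧ p'.1 = p.1)
  must p a p' :=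
    (a ∈ shared S T ∧ S.must p.1 a p'.1 ∧ T.must p.2 a p'.2) ∨
    (a ∈ S.act ∧ a ∉ shared S T ∧ S.must p.1 a p'.1 ∧ p'.2 = p.2) ∨
    (a ∈ T.act ∧ a ∉ shared S T ∧ T.must p.2 a p'.2 ∧ p'.1 = p.1)
  inp_out := by
    intro a ha hb
    have h1 := S.inp_out a; have h2 := T.inp_out a
    simp only [Set.mem_diff, Set.mem_union, shared, act, Set.mem_inter_iff] at ha hb
    tauto
  inp_intl := by
    intro a ha hb
    have h1 := S.inp_intl a; have h2 := T.inp_intl a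
    simp only [Set.mem_diff, Set.mem_union, shared, act, Set.mem_inter_iff] at ha hb
    tauto
  out_intl := by
    intro a ha hb
    have h1 := S.out_intl a; have h2 := T.out_intl a
    simp only [Set.mem_diff, Set.mem_union, shared, act, Set.mem_inter_iff] at ha hb
    tauto
  must_sub := by
    rintro p a p' (⟨h1, h2, h3⟩ | ⟨h1, h2, h3, h4⟩ | ⟨h1, h2, h3, h4⟩)
    · exact Or.inl ⟨h1, S.must_sub _ _ _ h2, T.must_sub _ _ _ h3⟩
    · exact Or.inr (Or.inl ⟨h1, h2, S.must_sub _ _ _ h3, h4⟩)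
    · exact Or.inr (Or.inr ⟨h1, h2, T.must_sub _ _ _ h3, h4⟩)

/-- Reachability (w.r.t. may-transitions) from the initial state. -/
def Reachable (M : MIO A) (s : M.State) : Prop :=
  Relation.ReflTransGen (fun x y => ∃ a, M.may x a y) M.start s

/-- Strong modal compatibility `S ⇄_sc T`. -/
def StrongCompat (S T : MIO A) : Prop :=
  ∃ h : Composable S T,
    ∀ p : S.State × T.State, (syncComp S T h).Reachable p →
      (∀ a ∈ S.out ∩ T.inp, ∀ s', S.may p.1 a s' → ∃ t', T.must p.2 a t') ∧
      (∀ a ∈ T.out ∩ S.inp, ∀ t', T.may p.2 a t' → ∃ s', S.must p.1 a s')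

/-- Weak modal compatibility `S ⇄_wc T`. -/
def WeakCompat (S T : MIO A) : Prop :=
  ∃ h : Composable S T,
    ∀ p : S.State × T.State, (syncComp S T h).Reachable p →
      (∀ a ∈ S.out ∩ T.inp, ∀ s', S.may p.1 a s' →
        ∃ t1 t', T.tauMustStar p.2 t1 ∧ T.must t1 a t') ∧
      (∀ a ∈ T.out ∩ S.inp, ∀ t', T.may p.2 a t' →
        ∃ s1 s', S.tauMustStar p.1 s1 ∧ S.must s1 a s')

/-- Finite executions: `Trace M s as s'` means `M` can go from `s` to `s'` by
a sequence of may-transitions labelled by the list of actions `as`. -/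
inductive Trace (M : MIO A) : M.State → List A → M.State → Prop
  | nil (s : M.State) : Trace M s [] s
  | cons {s s' s'' : M.State} {a : A} {as : List A} :
      M.may s a s' → Trace M s' as s'' → Trace M s (a :: as) s''

/-- Renaming the actions of a MIO along an injective function. -/
def rename (f : A → B) (hf : Function.Injective f) (S : MIO A) : MIO B where
  State := S.State
  start := S.start
  inp := f '' S.inp
  out := f '' S.out
  intl := f '' S.intl
  may s b s' := ∃ a, b = f a ∧ S.may s a s'
  must s b s' := ∃ a, b = f a ∧ S.must s a s'
  inp_out := by
    rintro b ⟨a1, h1, rfl⟩ ⟨a2, h2, heq⟩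
    obtain rfl := hf heq
    exact S.inp_out a2 h1 h2
  inp_intl := by
    rintro b ⟨a1, h1, rfl⟩ ⟨a2, h2, heq⟩
    obtain rfl := hf heq
    exact S.inp_intl a2 h1 h2
  out_intl := by
    rintro b ⟨a1, h1, rfl⟩ ⟨a2, h2, heq⟩
    obtain rfl := hf heq
    exact S.out_intl a2 h1 h2
  must_sub := by
    rintro s b s' ⟨a, rfl, h⟩
    exact ⟨a, rfl, S.must_sub _ _ _ h⟩

-- Tagging function: actions in `o` become the fresh "queue input" actions `n^▷`
-- (encoded as `Sum.inr n`), all other actions are kept (as `Sum.inl a`).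
open Classical in
noncomputable def tagged (o : Set A) : A → A ⊕ A :=
  fun a => if a ∈ o then Sum.inr a else Sum.inl a

theorem tagged_injective (o : Set A) : Function.Injective (tagged o) := by
  classical
  intro a b h
  by_cases ha : a ∈ o <;> by_cases hb : b ∈ o <;>
    simp [tagged, ha, hb] at h <;> tauto

/-- The queue MIO `Q_o`: a FIFO buffer for messages in `o`. States are finite
strings over `A` (with reachable states being strings over `o`), inputs are the
tagged actions `n^▷ = Sum.inr n`, outputs the actions `n = Sum.inl n` for `n ∈ o`.
Enqueue at the front, dequeue from the back; may- and must-transitions coincide. -/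
def queueMIO (o : Set A) : MIO (A ⊕ A) where
  State := List A
  start := []
  inp := Sum.inr '' o
  out := Sum.inl '' o
  intl := ∅
  may s b s' :=
    (∃ n ∈ o, b = Sum.inr n ∧ s' = n :: s) ∨ (∃ n ∈ o, b = Sum.inl n ∧ s = s' ++ [n])
  must s b s' :=
    (∃ n ∈ o, b = Sum.inr n ∧ s' = n :: s) ∨ (∃ n ∈ o, b = Sum.inl n ∧ s = s' ++ [n])
  inp_out := by rintro b ⟨n, hn, rfl⟩ ⟨m, hm, h⟩; simp at h
  inp_intl := by rintro b _ h; simp at h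
  out_intl := by rintro b _ h; simp at h
  must_sub := fun _ _ _ h => h

theorem omega_composable (o : Set A) (S : MIO A) (ho : o ⊆ S.out) :
    Composable (rename (tagged o) (tagged_injective o) S) (queueMIO o) := by
  classical
  rintro b ⟨hb1, hb2⟩
  have hq : (∃ n ∈ o, Sum.inr n = b) ∨ (∃ n ∈ o, Sum.inl n = b) := by
    simpa [queueMIO, act, Set.image, Set.mem_union] using hb2
  have hr : ∃ a, ((a ∈ S.inp ∨ a ∈ S.out) ∨ a ∈ S.intl) ∧ tagged o a = b := by
    simpa [rename, act, ← Set.image_union] using hb1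
  obtain ⟨a, _, ha⟩ := hr
  rcases hq with ⟨n, hn, hb⟩ | ⟨n, hn, hb⟩
  · right
    constructor
    · exact ⟨n, hn, hb⟩
    · refine ⟨n, ho hn, ?_⟩
      rw [← hb]; simp [tagged, hn]
  · exfalso
    rw [← hb] at ha
    by_cases h : a ∈ o
    · simp [tagged, h] at ha
    · simp [tagged, h] at ha
      exact h (ha ▸ hn)

/-- `Ω_o(S)`: the MIO `S` with an output queue for `o ⊆ out_S`, i.e. the
synchronous product of the renamed MIO `S_o^▷` with the queue MIO `Q_o`. -/
noncomputable def Omega (o : Set A) (S : MIO A) (ho : o ⊆ S.out) : MIO (A ⊕ A) :=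
  syncComp (rename (tagged o) (tagged_injective o) S) (queueMIO o) (omega_composable o S ho)

/-- The outputs of `S` that are inputs of `T`. -/
def oOf (S T : MIO A) : Set A := S.out ∩ T.inp

/-- `Ω_{o_S}(S)` where `o_S = out_S ∩ in_T`. -/
noncomputable def OmegaC (S T : MIO A) : MIO (A ⊕ A) :=
  Omega (oOf S T) S Set.inter_subset_left

/-- Composability of the queue-extended MIOs, i.e. definedness of `S ⊗_as T`. -/
def AsyncComposable (S T : MIO A) : Prop := Composable (OmegaC S T) (OmegaC T S)

/-- Asynchronous composition `S ⊗_as T = Ω_{o_S}(S) ⊗_sy Ω_{o_T}(T)`. -/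
noncomputable def asyncComp (S T : MIO A) (h : AsyncComposable S T) : MIO (A ⊕ A) :=
  syncComp (OmegaC S T) (OmegaC T S) h

/-- Asynchronous modal compatibility `S ⇄_ac T`. -/
def AsyncCompat (S T : MIO A) : Prop :=
  Composable S T ∧ WeakCompat (OmegaC S T) (OmegaC T S)

end MIO


/-! Every reachable state of `S' ⊗ T'` is related, componentwise by the two weak refinement
relations, to a reachable state of `S ⊗ T`: a step of the refined product is matched by a weak
may-path of the abstract one, and internal steps, never being shared, interleave freely.
At such a pair of states a may-output of `S'` is matched by a weak may-output of `S` from a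
state that is still reachable, so `T` can receive it by internal must-steps and a must-input,
and `T'`, refining `T`, can follow these must-transitions. -/

namespace MIO

variable {A : Type}

theorem SigEq.act_eq {S S' : MIO A} (h : SigEq S' S) : S'.act = S.act := by
  obtain ⟨h1, h2, h3⟩ := h
  simp only [act, h1, h2, h3]

theorem SigEq.shared_eq {S S' T T' : MIO A} (hS : SigEq S' S) (hT : SigEq T' T) :
    shared S' T' = shared S T := by
  rw [shared, shared, hS.act_eq, hT.act_eq]

theorem Composable.of_sigEq {S S' T T' : MIO A} (hc : Composable S T) (hS : SigEq S' S)
    (hT : SigEq T' T) : Composable S' T' := by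
  intro a ha
  rw [hS.shared_eq hT] at ha
  rw [hS.1, hS.2.1, hT.1, hT.2.1]
  exact hc ha

section Composable

variable {S T : MIO A} (hc : Composable S T) {a : A}
include hc

theorem Composable.mem_inp_union_out_left (ha : a ∈ shared S T) : a ∈ S.inp ∪ S.out :=
  (hc ha).elim (fun h => Or.inl h.1) (fun h => Or.inr h.2)

theorem Composable.mem_inp_union_out_right (ha : a ∈ shared S T) : a ∈ T.inp ∪ T.out :=
  (hc ha).elim (fun h => Or.inr h.2) (fun h => Or.inl h.1)

theorem Composable.not_mem_shared_of_mem_intl_left (ha : a ∈ S.intl) : a ∉ shared S T :=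
  fun hsh => (hc.mem_inp_union_out_left hsh).elim (S.inp_intl a · ha) (S.out_intl a · ha)

theorem Composable.not_mem_shared_of_mem_intl_right (ha : a ∈ T.intl) : a ∉ shared S T :=
  fun hsh => (hc.mem_inp_union_out_right hsh).elim (T.inp_intl a · ha) (T.out_intl a · ha)

end Composable

theorem Reachable.of_may {M : MIO A} {p q : M.State} {a : A} (hp : M.Reachable p)
    (h : M.may p a q) : M.Reachable q :=
  hp.tail ⟨a, h⟩

section syncComp

variable {S T : MIO A} {hc : Composable S T} {s s' s₁ s₂ : S.State} {t t' t₁ t₂ : T.State}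
  {a : A}

theorem Reachable.tauMayStar_left (hp : (syncComp S T hc).Reachable (s, t))
    (h : S.tauMayStar s s') : (syncComp S T hc).Reachable (s', t) := by
  induction h with
  | refl => exact hp
  | tail _ hstep ih =>
    obtain ⟨b, hb, hm⟩ := hstep
    exact ih.of_may (Or.inr (Or.inl
      ⟨Set.mem_union_right _ hb, hc.not_mem_shared_of_mem_intl_left hb, hm, rfl⟩))

theorem Reachable.tauMayStar_right (hp : (syncComp S T hc).Reachable (s, t))
    (h : T.tauMayStar t t') : (syncComp S T hc).Reachable (s, t') := by
  induction h with
  | refl => exact hp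
  | tail _ hstep ih =>
    obtain ⟨b, hb, hm⟩ := hstep
    exact ih.of_may (Or.inr (Or.inr
      ⟨Set.mem_union_right _ hb, hc.not_mem_shared_of_mem_intl_right hb, hm, rfl⟩))

theorem Reachable.weakMay_left (hp : (syncComp S T hc).Reachable (s, t))
    (h₁ : S.tauMayStar s s₁) (ha : a ∈ S.act) (hsh : a ∉ shared S T) (hm : S.may s₁ a s₂)
    (h₂ : S.tauMayStar s₂ s') : (syncComp S T hc).Reachable (s', t) :=
  ((hp.tauMayStar_left h₁).of_may (q := (s₂, t))
    (Or.inr (Or.inl ⟨ha, hsh, hm, rfl⟩))).tauMayStar_left h₂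

theorem Reachable.weakMay_right (hp : (syncComp S T hc).Reachable (s, t))
    (h₁ : T.tauMayStar t t₁) (ha : a ∈ T.act) (hsh : a ∉ shared S T) (hm : T.may t₁ a t₂)
    (h₂ : T.tauMayStar t₂ t') : (syncComp S T hc).Reachable (s, t') :=
  ((hp.tauMayStar_right h₁).of_may (q := (s, t₂))
    (Or.inr (Or.inr ⟨ha, hsh, hm, rfl⟩))).tauMayStar_right h₂

theorem Reachable.weakMay_sync (hp : (syncComp S T hc).Reachable (s, t))
    (hs₁ : S.tauMayStar s s₁) (ht₁ : T.tauMayStar t t₁) (ha : a ∈ shared S T)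
    (hms : S.may s₁ a s₂) (hmt : T.may t₁ a t₂) (hs₂ : S.tauMayStar s₂ s')
    (ht₂ : T.tauMayStar t₂ t') : (syncComp S T hc).Reachable (s', t') :=
  ((((hp.tauMayStar_left hs₁).tauMayStar_right ht₁).of_may (q := (s₂, t₂))
    (Or.inl ⟨ha, hms, hmt⟩)).tauMayStar_left hs₂).tauMayStar_right ht₂

end syncComp

def IsWeakRefinement (S T : MIO A) (R : S.State → T.State → Prop) : Prop :=
  ∀ s t, R s t →
    (∀ a ∈ T.inp ∪ T.out, ∀ t', T.must t a t' →
      ∃ s1 s2 s', S.tauMustStar s s1 ∧ S.must s1 a s2 ∧ S.tauMustStar s2 s' ∧ R s' t') ∧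
    (∀ a ∈ T.intl, ∀ t', T.must t a t' → ∃ s', S.tauMustStar s s' ∧ R s' t') ∧
    (∀ a ∈ S.inp ∪ S.out, ∀ s', S.may s a s' →
      ∃ t1 t2 t', T.tauMayStar t t1 ∧ T.may t1 a t2 ∧ T.tauMayStar t2 t' ∧ R s' t') ∧
    (∀ a ∈ S.intl, ∀ s', S.may s a s' → ∃ t', T.tauMayStar t t' ∧ R s' t')

theorem weakRefines_iff {S T : MIO A} :
    WeakRefines S T ↔ SigEq S T ∧ ∃ R, R S.start T.start ∧ IsWeakRefinement S T R :=
  Iff.rfl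

namespace IsWeakRefinement

variable {S' S : MIO A} {R : S'.State → S.State → Prop} (hR : IsWeakRefinement S' S R)
  {s' u' : S'.State} {s s₁ s₂ : S.State} {a : A}
include hR

theorem weakMay (h : R s' s) (ha : a ∈ S'.inp ∪ S'.out) (hm : S'.may s' a u') :
    ∃ s₁ s₂ u, S.tauMayStar s s₁ ∧ S.may s₁ a s₂ ∧ S.tauMayStar s₂ u ∧ R u' u :=
  (hR _ _ h).2.2.1 a ha u' hm

theorem tauMayStar (h : R s' s) (ha : a ∈ S'.intl) (hm : S'.may s' a u') :
    ∃ u, S.tauMayStar s u ∧ R u' u :=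
  (hR _ _ h).2.2.2 a ha u' hm

theorem exists_tauMustStar (h : R s' s) (hτ : S.tauMustStar s s₁) :
    ∃ s₁', S'.tauMustStar s' s₁' ∧ R s₁' s₁ := by
  induction hτ with
  | refl => exact ⟨s', .refl, h⟩
  | tail _ hstep ih =>
    obtain ⟨u', hu', hu⟩ := ih
    obtain ⟨b, hb, hm⟩ := hstep
    obtain ⟨v', hv', hv⟩ := (hR _ _ hu).2.1 b hb _ hm
    exact ⟨v', hu'.trans hv', hv⟩

theorem exists_tauMustStar_must (h : R s' s) (ha : a ∈ S.inp ∪ S.out)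
    (hτ : S.tauMustStar s s₁) (hm : S.must s₁ a s₂) :
    ∃ s₁' s₂', S'.tauMustStar s' s₁' ∧ S'.must s₁' a s₂' := by
  obtain ⟨u', hu', hu⟩ := hR.exists_tauMustStar h hτ
  obtain ⟨v₁', v₂', -, hv₁', hmv, -⟩ := (hR _ _ hu).1 a ha _ hm
  exact ⟨v₁', v₂', hu'.trans hv₁', hmv⟩

end IsWeakRefinement

theorem reachable_simulation {S S' T T' : MIO A} {hc : Composable S T}
    (hc' : Composable S' T') (hS : SigEq S' S) (hT : SigEq T' T)
    {RS : S'.State → S.State → Prop} {RT : T'.State → T.State → Prop}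
    (hRS : IsWeakRefinement S' S RS) (hRT : IsWeakRefinement T' T RT)
    (hRS₀ : RS S'.start S.start) (hRT₀ : RT T'.start T.start)
    {p' : S'.State × T'.State} (hp' : (syncComp S' T' hc').Reachable p') :
    ∃ p, (syncComp S T hc).Reachable p ∧ RS p'.1 p.1 ∧ RT p'.2 p.2 := by
  induction hp' with
  | refl => exact ⟨_, .refl, hRS₀, hRT₀⟩
  | tail _ hstep ih =>
    obtain ⟨⟨s, t⟩, hp, hs, ht⟩ := ih
    obtain ⟨a, ⟨ha, hms, hmt⟩ | ⟨ha, hsh, hm, heq⟩ | ⟨ha, hsh, hm, heq⟩⟩ := hstep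
    · obtain ⟨s₁, s₂, u, hs₁, hms, hs₂, hu⟩ :=
        hRS.weakMay hs (hc'.mem_inp_union_out_left ha) hms
      obtain ⟨t₁, t₂, v, ht₁, hmt, ht₂, hv⟩ :=
        hRT.weakMay ht (hc'.mem_inp_union_out_right ha) hmt
      exact ⟨(u, v), hp.weakMay_sync hs₁ ht₁ (hS.shared_eq hT ▸ ha) hms hmt hs₂ ht₂, hu, hv⟩
    · rcases ha with hext | hint
      · obtain ⟨s₁, s₂, u, hs₁, hm, hs₂, hu⟩ := hRS.weakMay hs hext hm
        exact ⟨(u, t), hp.weakMay_left hs₁ (hS.act_eq ▸ Or.inl hext) (hS.shared_eq hT ▸ hsh)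
          hm hs₂, hu, heq ▸ ht⟩
      · obtain ⟨u, hu₁, hu⟩ := hRS.tauMayStar hs hint hm
        exact ⟨(u, t), hp.tauMayStar_left hu₁, hu, heq ▸ ht⟩
    · rcases ha with hext | hint
      · obtain ⟨t₁, t₂, v, ht₁, hm, ht₂, hv⟩ := hRT.weakMay ht hext hm
        exact ⟨(s, v), hp.weakMay_right ht₁ (hT.act_eq ▸ Or.inl hext) (hS.shared_eq hT ▸ hsh)
          hm ht₂, heq ▸ hs, hv⟩
      · obtain ⟨v, hv₁, hv⟩ := hRT.tauMayStar ht hint hm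
        exact ⟨(s, v), hp.tauMayStar_right hv₁, heq ▸ hs, hv⟩

end MIO

open MIO

/-- Weak modal compatibility is preserved by weak modal refinement. -/
theorem weakCompat_preserved (A : Type) (S S' T T' : MIO A)
    (hc : WeakCompat S T) (hS : WeakRefines S' S) (hT : WeakRefines T' T) :
    WeakCompat S' T' := by
  obtain ⟨hc, hcompat⟩ := hc
  obtain ⟨sigS, RS, hRS₀, hRS⟩ := weakRefines_iff.mp hS
  obtain ⟨sigT, RT, hRT₀, hRT⟩ := weakRefines_iff.mp hT
  have hc' := hc.of_sigEq sigS sigT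
  refine ⟨hc', fun p' hp' => ?_⟩
  obtain ⟨⟨s, t⟩, hp, hs, ht⟩ := reachable_simulation hc' sigS sigT hRS hRT hRS₀ hRT₀ hp'
  constructor
  · intro a ha u' hm
    have ha' : a ∈ S.out ∩ T.inp := by rwa [← sigS.2.1, ← sigT.1]
    obtain ⟨s₁, s₂, -, hs₁, hms, -⟩ := hRS.weakMay hs (Or.inr ha.1) hm
    obtain ⟨t₁, t₂, ht₁, hmt⟩ := (hcompat _ (hp.tauMayStar_left hs₁)).1 a ha' s₂ hms
    exact hRT.exists_tauMustStar_must ht (Or.inl ha'.2) ht₁ hmt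
  · intro a ha v' hm
    have ha' : a ∈ T.out ∩ S.inp := by rwa [← sigT.2.1, ← sigS.1]
    obtain ⟨t₁, t₂, -, ht₁, hmt, -⟩ := hRT.weakMay ht (Or.inr ha.1) hm
    obtain ⟨s₁, s₂, hs₁, hms⟩ := (hcompat _ (hp.tauMayStar_right ht₁)).2 a ha' t₂ hmt
    exact hRS.exists_tauMustStar_must hs (Or.inl ha'.2) hs₁ hms
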